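/- arXiv:1205.6961 — 4 statements merged into one kernel-verified Lean document; each statement's English description precedes it below -/
import Mathlib

section
/- Let G be a finite simple undirected graph on n vertices and let P be a shortest path between two vertices u and v. Then the sum of the degrees of the vertices on P is at most 3n. -/
/-!
Along a shortest path from `u`, the vertex `x` sits at position `dist u x`, so the positions of
the path's vertices are pairwise distinct. Two neighbours of a common vertex `w` are at distance
at most two, hence the positions of all neighbours of `w` on the path lie in a window of three
consecutive integers, and `w` has at most three neighbours on the path. Double counting the
adjacent pairs `(x, w)` with `x` on the path, grouped by `w`, gives the bound `3n`.
-/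

open Finset

theorem Finset.card_le_add_one_of_injOn_of_forall_le_add {α : Type*} {s : Finset α} {f : α → ℕ}
    {k : ℕ} (hf : Set.InjOn f s) (hspread : ∀ x ∈ s, ∀ y ∈ s, f y ≤ f x + k) :
    #s ≤ k + 1 := by
  rcases s.eq_empty_or_nonempty with rfl | hne
  · simp
  obtain ⟨x₀, hx₀, hmin⟩ := s.exists_min_image f hne
  calc #s ≤ #(Icc (f x₀) (f x₀ + k)) :=
        card_le_card_of_injOn f (fun y hy => mem_Icc.mpr ⟨hmin y hy, hspread x₀ hx₀ y hy⟩) hf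
    _ = k + 1 := by rw [Nat.card_Icc]; omega

namespace SimpleGraph

variable {V : Type*} {G : SimpleGraph V}

theorem dist_le_two_of_adj_of_adj {x w y : V} (hxw : G.Adj x w) (hwy : G.Adj w y) :
    G.dist x y ≤ 2 :=
  dist_le (.cons hxw (.cons hwy .nil))

namespace Walk

variable {u v : V} {p : G.Walk u v}

theorem dist_eq_length_takeUntil [DecidableEq V] (hp : p.length = G.dist u v) {x : V}
    (hx : x ∈ p.support) :
    G.dist u x = (p.takeUntil x hx).length :=
  (length_eq_dist_of_subwalk hp (p.isSubwalk_takeUntil hx)).symm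

theorem getVert_dist_of_mem_support (hp : p.length = G.dist u v) {x : V}
    (hx : x ∈ p.support) : p.getVert (G.dist u x) = x := by
  classical
  rw [dist_eq_length_takeUntil hp hx, getVert_length_takeUntil]

theorem injOn_dist_support (hp : p.length = G.dist u v) :
    Set.InjOn (G.dist u) {x | x ∈ p.support} := fun x hx y hy hxy => by
  rw [← getVert_dist_of_mem_support hp hx, ← getVert_dist_of_mem_support hp hy, hxy]

theorem card_filter_adj_support_le_three [DecidableEq V] [DecidableRel G.Adj]
    (hp : p.length = G.dist u v) (w : V) :
    #{x ∈ p.support.toFinset | G.Adj x w} ≤ 3 := by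
  refine card_le_add_one_of_injOn_of_forall_le_add (f := G.dist u) ?_ ?_
  · exact (injOn_dist_support hp).mono fun x hx => (List.mem_toFinset.mp (mem_filter.mp hx).1)
  · intro x hx y hy
    have hxw := (mem_filter.mp hx).2
    have hwy := (mem_filter.mp hy).2.symm
    calc G.dist u y ≤ G.dist u x + G.dist x y :=
          (hxw.reachable.trans hwy.reachable).dist_triangle_right u
      _ ≤ G.dist u x + 2 := by grw [dist_le_two_of_adj_of_adj hxw hwy]

end Walk

theorem sum_degree_eq_sum_card_filter_adj [Fintype V] [DecidableRel G.Adj] (s : Finset V) :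
    ∑ x ∈ s, G.degree x = ∑ w, #{x ∈ s | G.Adj x w} := by
  simp_rw [← card_neighborFinset_eq_degree, neighborFinset_eq_filter]
  exact sum_card_bipartiteAbove_eq_sum_card_bipartiteBelow G.Adj

end SimpleGraph

/-- On a shortest path in a finite simple graph on `n` vertices, the sum of the
degrees of the vertices of the path is at most `3 * n`. -/
theorem shortest_path_degree_sum {V : Type*} [Fintype V] [DecidableEq V]
    (G : SimpleGraph V) [DecidableRel G.Adj] {u v : V}
    (p : G.Walk u v) (hshort : p.length = G.dist u v) :
    (p.support.map (fun w => G.degree w)).sum ≤ 3 * Fintype.card V := by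
  have hnodup : p.support.Nodup := (p.isPath_of_length_eq_dist hshort).support_nodup
  calc (p.support.map (fun w => G.degree w)).sum
      = ∑ x ∈ p.support.toFinset, G.degree x := (List.sum_toFinset _ hnodup).symm
    _ = ∑ w, #{x ∈ p.support.toFinset | G.Adj x w} :=
      SimpleGraph.sum_degree_eq_sum_card_filter_adj _
    _ ≤ ∑ _w : V, 3 := sum_le_sum fun w _ => p.card_filter_adj_support_le_three hshort w
    _ = 3 * Fintype.card V := by rw [sum_const, card_univ, smul_eq_mul, mul_comm]
end

section
/- Let X_1, ..., X_m be independent Bernoulli random variables, each with success probability at least p = 1/(2Δ) for some integer Δ ≥ 1, and let m = 16Δ(D + k + log₂ n) for positive integers D, k, n. Then the probability that ∑ X_i < D is at most 2^{-(k + 2 log₂ n)}. -/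
/-!
Chernoff's method with `t = -log 2`: a `{0,1}`-valued variable with success probability
`q ≥ p` has `E[2^{-X}] = 1 - q/2 ≤ exp(-p/2)`, so by independence
`P(∑ Xᵢ ≤ D) ≤ 2^D · E[2^{-∑ Xᵢ}] ≤ 2^D · exp(-m p / 2)`. With `p = 1/(2Δ)` and
`m = 16Δ(D + k + log₂ n)` the exponent is `-4(D + k + log₂ n)`, and `log 2 ≤ 1` absorbs both
the factor `2^D` and the change of base from `e` to `2`.
-/

open MeasureTheory ProbabilityTheory Real

lemma eq_indicator_of_zero_or_one {α : Type*} {f : α → ℝ} (hf : ∀ x, f x = 0 ∨ f x = 1) :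
    f = {x | f x = 1}.indicator 1 := by
  funext x
  rcases hf x with h | h <;> simp [Set.indicator, h]

lemma exp_mul_of_zero_or_one (t : ℝ) {x : ℝ} (hx : x = 0 ∨ x = 1) :
    exp (t * x) = 1 + (exp t - 1) * x := by
  rcases hx with rfl | rfl <;> simp

section ZeroOneValued

variable {Ω : Type*} [MeasurableSpace Ω] {μ : Measure Ω} {X : Ω → ℝ}

lemma integrable_of_zero_or_one [IsFiniteMeasure μ] (hXm : Measurable X)
    (hX : ∀ ω, X ω = 0 ∨ X ω = 1) : Integrable X μ := by
  rw [eq_indicator_of_zero_or_one hX]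
  exact (integrable_const 1).indicator (hXm (measurableSet_singleton 1))

lemma integrable_exp_mul_of_zero_or_one [IsFiniteMeasure μ] (hXm : Measurable X)
    (hX : ∀ ω, X ω = 0 ∨ X ω = 1) (t : ℝ) : Integrable (fun ω ↦ exp (t * X ω)) μ := by
  simp only [exp_mul_of_zero_or_one t (hX _)]
  exact (integrable_const 1).add ((integrable_of_zero_or_one hXm hX).const_mul _)

lemma mgf_of_zero_or_one [IsProbabilityMeasure μ] (hXm : Measurable X)
    (hX : ∀ ω, X ω = 0 ∨ X ω = 1) (t : ℝ) :
    mgf X μ t = 1 + (exp t - 1) * μ.real {ω | X ω = 1} := by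
  have hXintegral : ∫ ω, X ω ∂μ = μ.real {ω | X ω = 1} := by
    conv_lhs => rw [eq_indicator_of_zero_or_one hX]
    exact integral_indicator_one (hXm (measurableSet_singleton 1))
  simp only [mgf, exp_mul_of_zero_or_one t (hX _)]
  rw [integral_add (integrable_const 1) ((integrable_of_zero_or_one hXm hX).const_mul _),
    integral_const_mul, hXintegral]
  simp

lemma mgf_le_exp_of_zero_or_one [IsProbabilityMeasure μ] (hXm : Measurable X)
    (hX : ∀ ω, X ω = 0 ∨ X ω = 1) (t : ℝ) :
    mgf X μ t ≤ exp ((exp t - 1) * μ.real {ω | X ω = 1}) := by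
  rw [mgf_of_zero_or_one hXm hX t, add_comm]
  exact add_one_le_exp _

end ZeroOneValued

theorem measureReal_sum_le_le_of_zero_or_one {Ω ι : Type*} [MeasurableSpace Ω] [Fintype ι]
    {μ : Measure Ω} [IsProbabilityMeasure μ] {X : ι → Ω → ℝ} (hXm : ∀ i, Measurable (X i))
    (hind : iIndepFun X μ) (hX : ∀ i ω, X i ω = 0 ∨ X i ω = 1) {p : ℝ}
    (hp : ∀ i, p ≤ μ.real {ω | X i ω = 1}) {t : ℝ} (ht : t ≤ 0) (a : ℝ) :
    μ.real {ω | ∑ i, X i ω ≤ a} ≤ exp (-t * a + Fintype.card ι * ((exp t - 1) * p)) := by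
  have hmgf : mgf (∑ i, X i) μ t ≤ exp (Fintype.card ι * ((exp t - 1) * p)) := calc
    mgf (∑ i, X i) μ t = ∏ i, mgf (X i) μ t := hind.mgf_sum hXm _
    _ ≤ ∏ _i : ι, exp ((exp t - 1) * p) := by
      refine Finset.prod_le_prod (fun i _ ↦ mgf_nonneg) fun i _ ↦ ?_
      refine (mgf_le_exp_of_zero_or_one (hXm i) (hX i) t).trans (exp_le_exp.2 ?_)
      exact mul_le_mul_of_nonpos_left (hp i) (sub_nonpos.2 (exp_le_one_iff.2 ht))
    _ = exp (Fintype.card ι * ((exp t - 1) * p)) := by simp [← exp_nat_mul]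
  have hint : Integrable (fun ω ↦ exp (t * (∑ i, X i) ω)) μ :=
    hind.integrable_exp_mul_sum hXm fun i _ ↦ integrable_exp_mul_of_zero_or_one (hXm i) (hX i) t
  calc μ.real {ω | ∑ i, X i ω ≤ a} = μ.real {ω | (∑ i, X i) ω ≤ a} := by simp
    _ ≤ exp (-t * a) * mgf (∑ i, X i) μ t := measure_le_le_exp_mul_mgf a ht hint
    _ ≤ exp (-t * a + Fintype.card ι * ((exp t - 1) * p)) := by
      rw [exp_add]; gcongr

lemma exp_log_two_mul_sub_le {a b c : ℝ} (ha : 0 ≤ a) (hb : 0 ≤ b) (hc : 0 ≤ c) :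
    exp (log 2 * a - 4 * (a + b + c)) ≤ (2 : ℝ) ^ (-(b + 2 * c)) := by
  rw [rpow_def_of_pos two_pos, exp_le_exp]
  have hlog2 : log 2 ≤ 1 := (log_le_sub_one_of_pos two_pos).trans (by norm_num)
  nlinarith [log_pos one_lt_two]

theorem chernoff_gossip_step_general {Ω : Type*} [MeasurableSpace Ω]
    (P : Measure Ω) [IsProbabilityMeasure P]
    (m Δ D k n : ℕ) (hΔ : 1 ≤ Δ)
    (hm : (m : ℝ) = 16 * Δ * (D + k + Real.logb 2 n))
    (X : Fin m → Ω → ℝ) (hmeas : ∀ i, Measurable (X i))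
    (hind : iIndepFun X P)
    (hBer : ∀ i ω, X i ω = 0 ∨ X i ω = 1)
    (hp : ∀ i, (1 : ℝ) / (2 * Δ) ≤ (P {ω | X i ω = 1}).toReal) :
    (P {ω | ∑ i, X i ω < D}).toReal ≤ (2 : ℝ) ^ (-((k : ℝ) + 2 * Real.logb 2 n)) := by
  have hΔ0 : (Δ : ℝ) ≠ 0 := Nat.cast_ne_zero.2 (by omega)
  have hexponent : -(-log 2) * D + m * ((exp (-log 2) - 1) * (1 / (2 * Δ)))
      = log 2 * D - 4 * (D + k + logb 2 n) := by
    rw [exp_neg, exp_log two_pos, hm]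
    field_simp
    ring
  calc P.real {ω | ∑ i, X i ω < D} ≤ P.real {ω | ∑ i, X i ω ≤ D} :=
        measureReal_mono (Set.ofPred_subset_ofPred_of_imp fun _ ↦ le_of_lt)
    _ ≤ exp (log 2 * D - 4 * (D + k + logb 2 n)) := by
      have := measureReal_sum_le_le_of_zero_or_one hmeas hind hBer hp
        (neg_nonpos.2 (log_nonneg one_le_two)) D
      rwa [Fintype.card_fin, hexponent] at this
    _ ≤ (2 : ℝ) ^ (-((k : ℝ) + 2 * logb 2 n)) :=
      exp_log_two_mul_sub_le (Nat.cast_nonneg D) (Nat.cast_nonneg k)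
        (div_nonneg (log_natCast_nonneg n) (log_nonneg one_le_two))

/-- Chernoff bound step: `m = 16Δ(D + k + log₂ n)` independent Bernoulli trials
with success probability at least `1/(2Δ)` produce fewer than `D` successes with
probability at most `2^{-(k + 2 log₂ n)}`. -/
theorem chernoff_gossip_step {Ω : Type*} [MeasurableSpace Ω]
    (P : Measure Ω) [IsProbabilityMeasure P]
    (m Δ D k n : ℕ) (hΔ : 1 ≤ Δ) (hD : 0 < D) (hk : 0 < k) (hn : 0 < n)
    (hm : (m : ℝ) = 16 * Δ * (D + k + Real.logb 2 n))
    (X : Fin m → Ω → ℝ) (hmeas : ∀ i, Measurable (X i))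
    (hind : iIndepFun X P)
    (hBer : ∀ i ω, X i ω = 0 ∨ X i ω = 1)
    (hp : ∀ i, (1 : ℝ) / (2 * Δ) ≤ (P {ω | X i ω = 1}).toReal) :
    (P {ω | ∑ i, X i ω < D}).toReal ≤ (2 : ℝ) ^ (-((k : ℝ) + 2 * Real.logb 2 n)) :=
  chernoff_gossip_step_general P m Δ D k n hΔ hm X hmeas hind hBer hp
end

section
/- Round robin routing correctness (abstract pipelining lemma): Consider a synchronous protocol on a connected graph G where k totally ordered messages are initially distributed among nodes, each node u contacts each neighbor at least once in every window of Δ_u consecutive rounds (Δ_u = degree of u), and whenever node u contacts a neighbor it forwards the smallest message it knows that it has not yet sent to that neighbor. Then for all nodes u, v, every message m initially at u, and every integer i ≥ 0: at time dist(u,v) + Δ·i, node v knows either m or at least i+1 messages smaller than m, where dist(u,v) = min over u–v paths P of ∑_{w ∈ P \ {v}} deg(w) and Δ is the maximum degree. -/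
/-!
Strong induction on `dist v = weightedDist G (init m) v`. For `v ≠ init m` the last edge `w — v`
of an optimal path has `dist w + deg w ≤ dist v`. Pick a contact time `t_j` of `w` with `v` in each
window `[dist w + Δ j, dist w + Δ j + deg w)`; these are strictly increasing and all before
`dist v + Δ i` for `j ≤ i`. If `v` still lacks `m`, then `w` has never sent it, so at `t_j` it
knows `m` or `j + 1` messages below `m` (induction hypothesis), and greediness forces it either to
send a message below `m` for the first time or to have sent `j + 1` of them already. Counting the
first-time sends, `w` has sent `v` at least `i + 1` distinct messages below `m` by `t_i`.
-/

/-- Weighted distance: minimum over `u`–`v` paths of the sum of the degrees of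
all vertices of the path except the endpoint `v`. -/
noncomputable def weightedDist {V : Type*} [Fintype V]
    (G : SimpleGraph V) [DecidableRel G.Adj] (u v : V) : ℕ :=
  sInf {m | ∃ p : G.Walk u v, p.IsPath ∧
    (p.support.dropLast.map fun w => G.degree w).sum = m}

section WeightedDist

open SimpleGraph

variable {V : Type*} [Fintype V] {G : SimpleGraph V} [DecidableRel G.Adj]

lemma weightedDist_le {u v : V} {p : G.Walk u v} (hp : p.IsPath) :
    weightedDist G u v ≤ (p.support.dropLast.map fun w => G.degree w).sum :=
  Nat.sInf_le ⟨p, hp, rfl⟩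

lemma exists_adj_weightedDist_add_degree_le {u v : V} (huv : G.Reachable u v) (hne : u ≠ v) :
    ∃ w, G.Adj w v ∧ weightedDist G u w + G.degree w ≤ weightedDist G u v := by
  classical
  obtain ⟨p, hp, hpsum⟩ := Nat.sInf_mem (s := {m | ∃ p : G.Walk u v, p.IsPath ∧
      (p.support.dropLast.map fun w => G.degree w).sum = m})
    ⟨_, huv.some.bypass, huv.some.bypass_isPath, rfl⟩
  have hnil : ¬ p.Nil := Walk.not_nil_of_ne hne
  refine ⟨p.penultimate, Walk.adj_penultimate hnil, ?_⟩
  have hsupp : p.support.dropLast = p.dropLast.support.dropLast ++ [p.penultimate] := by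
    conv_lhs => rw [← Walk.concat_dropLast (Walk.adj_penultimate hnil)]
    rw [Walk.support_concat, List.dropLast_concat, Walk.dropLast_support_concat]
  calc weightedDist G u p.penultimate + G.degree p.penultimate
      ≤ (p.dropLast.support.dropLast.map fun w => G.degree w).sum + G.degree p.penultimate :=
        Nat.add_le_add_right (weightedDist_le hp.dropLast) _
    _ = weightedDist G u v := by
        rw [weightedDist, ← hpsum, hsupp, List.map_append, List.sum_append]
        simp

end WeightedDist

section Pipelining

variable {M : Type*}

def KnowsOrManyBelow [LT M] (know : M → Prop) (m : M) (n : ℕ) : Prop :=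
  know m ∨ ∃ A : Finset M, n ≤ A.card ∧ ∀ m' ∈ A, m' < m ∧ know m'

lemma KnowsOrManyBelow.mono [LT M] {know know' : M → Prop} {m : M} {n : ℕ}
    (h : KnowsOrManyBelow know m n) (hle : ∀ x, know x → know' x) :
    KnowsOrManyBelow know' m n :=
  h.imp (hle m) fun ⟨A, hA, hAm⟩ => ⟨A, hA, fun x hx => (hAm x hx).imp_right (hle x)⟩

lemma fresh_or_sent_of_knowsOrManyBelow [LinearOrder M] {know : M → Prop}
    {sent : ℕ → M → Prop} {t : ℕ} {m : M} {n : ℕ}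
    (hgreedy : ∀ x, know x → (∀ s ≤ t, ¬ sent s x) →
      ∃ x' ≤ x, sent t x' ∧ ∀ s < t, ¬ sent s x')
    (hm : ∀ s ≤ t, ¬ sent s m) (hknow : KnowsOrManyBelow know m n) :
    (∃ x < m, sent t x ∧ ∀ s < t, ¬ sent s x) ∨
      ∃ B : Finset M, n ≤ B.card ∧ ∀ b ∈ B, b < m ∧ ∃ s ≤ t, sent s b := by
  rcases hknow with hknow | ⟨B, hB, hBm⟩
  · obtain ⟨x, hxm, hsent, hfresh⟩ := hgreedy m hknow hm
    exact .inl ⟨x, hxm.lt_of_ne (by rintro rfl; exact hm t le_rfl hsent), hsent, hfresh⟩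
  · by_cases hall : ∀ b ∈ B, ∃ s ≤ t, sent s b
    · exact .inr ⟨B, hB, fun b hb => ⟨(hBm b hb).1, hall b hb⟩⟩
    · push Not at hall
      obtain ⟨b, hb, hunsent⟩ := hall
      obtain ⟨x, hxb, hsent, hfresh⟩ := hgreedy b (hBm b hb).2 hunsent
      exact .inl ⟨x, hxb.trans_lt (hBm b hb).1, hsent, hfresh⟩

lemma exists_card_sent_of_fresh_or_sent (P : M → Prop) (sent : ℕ → M → Prop) {f : ℕ → ℕ}
    (hf : StrictMono f) (i : ℕ)
    (h : ∀ j ≤ i, (∃ x, P x ∧ sent (f j) x ∧ ∀ s < f j, ¬ sent s x) ∨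
      ∃ B : Finset M, j + 1 ≤ B.card ∧ ∀ b ∈ B, P b ∧ ∃ s ≤ f j, sent s b) :
    ∃ A : Finset M, i + 1 ≤ A.card ∧ ∀ b ∈ A, P b ∧ ∃ s ≤ f i, sent s b := by
  classical
  induction i with
  | zero =>
    rcases h 0 le_rfl with ⟨x, hx, hsent, -⟩ | hB
    · exact ⟨{x}, by simp, by simpa using ⟨hx, f 0, le_rfl, hsent⟩⟩
    · exact hB
  | succ i ih =>
    rcases h (i + 1) le_rfl with ⟨x, hx, hsent, hfresh⟩ | hB
    · obtain ⟨A, hA, hAsent⟩ := ih fun j hj => h j (by omega)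
      have hlt : f i < f (i + 1) := hf i.lt_succ_self
      have hxA : x ∉ A := fun hxA =>
        let ⟨_, s, hs, hsent⟩ := hAsent x hxA
        hfresh s (hs.trans_lt hlt) hsent
      refine ⟨insert x A, by rw [Finset.card_insert_of_notMem hxA]; omega, ?_⟩
      simp only [Finset.forall_mem_insert]
      exact ⟨⟨hx, _, le_rfl, hsent⟩, fun b hb =>
        (hAsent b hb).imp_right fun ⟨s, hs, hsent⟩ => ⟨s, hs.trans hlt.le, hsent⟩⟩
    · exact hB

lemma knowsOrManyBelow_of_contacts [LinearOrder M] {V : Type*} {K : ℕ → V → M → Prop}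
    {S : ℕ → V → V → M → Prop} (hmono : ∀ t v m, K t v m → K (t + 1) v m)
    (hrecv : ∀ t u v m, S t u v m → K (t + 1) v m) {w v : V} {δ D d d' : ℕ}
    (hδ : δ ≤ D) (hd : d' + δ ≤ d)
    (hcontact : ∀ t : ℕ, ∃ t', t ≤ t' ∧ t' < t + δ ∧
      ∀ m, K t' w m → (∀ s, s ≤ t' → ¬ S s w v m) →
        ∃ m', m' ≤ m ∧ S t' w v m' ∧ ∀ s, s < t' → ¬ S s w v m')
    {m : M} (hw : ∀ j, KnowsOrManyBelow (K (d' + D * j) w) m (j + 1)) (i : ℕ) :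
    KnowsOrManyBelow (K (d + D * i) v) m (i + 1) := by
  have hK : ∀ {t t'} {u : V} {x : M}, t ≤ t' → K t u x → K t' u x := fun h =>
    monotone_nat_of_le_succ (f := fun t => K t _ _) (fun t => hmono t _ _) h
  by_cases hKm : K (d + D * i) v m
  · exact .inl hKm
  choose f hf_ge hf_lt hf_greedy using fun j => hcontact (d' + D * j)
  have hf : StrictMono f := strictMono_nat_of_lt_succ fun j => calc
    f j < d' + D * j + δ := hf_lt j
    _ ≤ d' + D * (j + 1) := by rw [mul_add_one]; omega
    _ ≤ f (j + 1) := hf_ge (j + 1)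
  have hf_le : ∀ j ≤ i, f j < d + D * i := fun j hj =>
    (hf_lt j).trans_le (by have := Nat.mul_le_mul_left D hj; omega)
  have hunsent : ∀ s < d + D * i, ¬ S s w v m := fun s hs hS =>
    hKm (hK (by omega) (hrecv _ _ _ _ hS))
  obtain ⟨A, hA, hAsent⟩ := exists_card_sent_of_fresh_or_sent (· < m) (S · w v) hf i
    fun j hj => fresh_or_sent_of_knowsOrManyBelow (hf_greedy j)
      (fun s hs => hunsent s (hs.trans_lt (hf_le j hj))) ((hw j).mono fun x => hK (hf_ge j))
  refine .inr ⟨A, hA, fun b hb => ?_⟩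
  obtain ⟨hbm, s, hs, hS⟩ := hAsent b hb
  exact ⟨hbm, hK (by have := hf_le i le_rfl; omega) (hrecv _ _ _ _ hS)⟩

end Pipelining

theorem round_robin_pipelining_general {V M : Type*} [Fintype V]
    [LinearOrder M]
    (G : SimpleGraph V) [DecidableRel G.Adj] (hconn : G.Connected)
    (K : ℕ → V → M → Prop) (S : ℕ → V → V → M → Prop) (init : M → V)
    -- initially, the owner of each message knows it
    (hinit : ∀ m, K 0 (init m) m)
    -- knowledge persists
    (hmono : ∀ t v m, K t v m → K (t + 1) v m)
    -- a forwarded message is known to the recipient in the next round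
    (hrecv : ∀ t u v m, S t u v m → K (t + 1) v m)
    -- schedule and greedy choice: within every window of `deg u` rounds, `u`
    -- contacts each neighbor `v` and then sends the smallest message it knows
    -- and has not yet sent to `v` (so any unsent known `m` is dominated by the
    (hsched : ∀ u v, G.Adj u v → ∀ t : ℕ, ∃ t', t ≤ t' ∧ t' < t + G.degree u ∧
      ∀ m, K t' u m → (∀ s, s ≤ t' → ¬ S s u v m) →
        ∃ m', m' ≤ m ∧ S t' u v m' ∧ ∀ s, s < t' → ¬ S s u v m') :
    ∀ (m : M) (v : V) (i : ℕ),
      K (weightedDist G (init m) v + G.maxDegree * i) v m ∨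
      ∃ A : Finset M, i + 1 ≤ A.card ∧ ∀ m' ∈ A,
        m' < m ∧ K (weightedDist G (init m) v + G.maxDegree * i) v m' := by
  intro m v
  induction hd : weightedDist G (init m) v using Nat.strong_induction_on generalizing v with
  | _ d ih =>
    intro i
    by_cases hv : init m = v
    · subst hv
      exact .inl (monotone_nat_of_le_succ (f := fun t => K t (init m) m)
        (fun t => hmono t _ _) (Nat.zero_le _) (hinit m))
    obtain ⟨w, hwv, hdist⟩ := exists_adj_weightedDist_add_degree_le (hconn (init m) v) hv
    have hdeg : 0 < G.degree w := G.degree_pos_iff_exists_adj w |>.mpr ⟨v, hwv⟩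
    exact knowsOrManyBelow_of_contacts hmono hrecv (G.degree_le_maxDegree w) (hd ▸ hdist)
      (hsched w v hwv) (fun j => ih _ (by omega) w rfl j) i

/-- Abstract pipelining lemma for round robin routing.  `K t v m` means node
`v` knows message `m` at time `t`; `S t u v m` means `u` forwards `m` to its
neighbor `v` in round `t`; `init m` is the node initially holding `m`.  Each
node `u` contacts each neighbor at least once in every window of `deg u`
rounds, and upon contact forwards the smallest known message not yet sent to
that neighbor.  Then at time `dist(u,v) + Δ·i` node `v` knows `m` (initially at
`u = init m`) or at least `i+1` messages smaller than `m`. -/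
theorem round_robin_pipelining {V M : Type*} [Fintype V] [Fintype M]
    [LinearOrder M]
    (G : SimpleGraph V) [DecidableRel G.Adj] (hconn : G.Connected)
    (K : ℕ → V → M → Prop) (S : ℕ → V → V → M → Prop) (init : M → V)
    -- initially, the owner of each message knows it
    (hinit : ∀ m, K 0 (init m) m)
    -- knowledge persists
    (hmono : ∀ t v m, K t v m → K (t + 1) v m)
    -- a forwarded message is known to the recipient in the next round
    (hrecv : ∀ t u v m, S t u v m → K (t + 1) v m)
    -- only known messages are forwarded, and only along edges
    (hsend : ∀ t u v m, S t u v m → K t u m ∧ G.Adj u v)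
    -- schedule and greedy choice: within every window of `deg u` rounds, `u`
    -- contacts each neighbor `v` and then sends the smallest message it knows
    -- and has not yet sent to `v` (so any unsent known `m` is dominated by the
    (hsched : ∀ u v, G.Adj u v → ∀ t : ℕ, ∃ t', t ≤ t' ∧ t' < t + G.degree u ∧
      ∀ m, K t' u m → (∀ s, s ≤ t' → ¬ S s u v m) →
        ∃ m', m' ≤ m ∧ S t' u v m' ∧ ∀ s, s < t' → ¬ S s u v m') :
    ∀ (m : M) (v : V) (i : ℕ),
      K (weightedDist G (init m) v + G.maxDegree * i) v m ∨
      ∃ A : Finset M, i + 1 ≤ A.card ∧ ∀ m' ∈ A,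
        m' < m ∧ K (weightedDist G (init m) v + G.maxDegree * i) v m' :=
  round_robin_pipelining_general G hconn K S init hinit hmono hrecv hsched
end

section
/- Round robin routing disseminates all k messages in at most min{3n, ΔD} + Δk rounds: under the protocol where each node u contacts every neighbor at least once every Δ_u rounds and forwards messages without repetition to the same neighbor, after min{3n, ΔD} + Δk rounds every node knows all k messages. -/
/-!
Fix a message `m` and a shortest path from its source to `v`. The pipelining invariant
"at time `t + Δ i` the node knows `m` or at least `i + 1` messages smaller than `m`" crosses
an edge `u → w` with a delay of `deg u ≤ Δ`: in each window of `deg u` rounds, `u` either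
sends `m`, or sends a smaller message it has not sent before, or has already sent every
message it knows below `m`. Along the path these delays add up to at most `Δ D`, and to at
most `3 n` because a vertex is adjacent to at most three vertices of a shortest path. For
`i = k` the second alternative of the invariant is impossible.
-/

open Finset

namespace SimpleGraph.Walk

variable {V : Type*} {G : SimpleGraph V} {u v : V}

theorem sub_le_dist_getVert (p : G.Walk u v) (hp : p.length = G.dist u v) {i j : ℕ}
    (hj : j ≤ p.length) : j - i ≤ G.dist (p.getVert i) (p.getVert j) := by
  have hi : G.dist u (p.getVert i) ≤ i := (G.dist_le (p.take i)).trans (by simp)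
  have hj' : G.dist (p.getVert j) v ≤ p.length - j := (G.dist_le (p.drop j)).trans (by simp)
  have := (p.take i).reachable.dist_triangle_left v
  have := (p.drop j).reachable.dist_triangle_right (p.getVert i)
  omega

theorem card_filter_adj_getVert_le_three [DecidableRel G.Adj] (p : G.Walk u v)
    (hp : p.length = G.dist u v) (x : V) :
    #{l ∈ range p.length | G.Adj (p.getVert l) x} ≤ 3 := by
  set F := {l ∈ range p.length | G.Adj (p.getVert l) x}
  rcases F.eq_empty_or_nonempty with hF | hF
  · simp [hF]
  have hsub : F ⊆ Icc (F.min' hF) (F.min' hF + 2) := by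
    intro l hl
    obtain ⟨-, hmin⟩ := mem_filter.mp (F.min'_mem hF)
    obtain ⟨hl', hadj⟩ := mem_filter.mp hl
    have h2 : G.dist (p.getVert (F.min' hF)) (p.getVert l) ≤ 2 :=
      G.dist_le ((Walk.nil.cons hadj.symm).cons hmin)
    have := p.sub_le_dist_getVert hp (i := F.min' hF) (mem_range.mp hl').le
    have := F.min'_le l hl
    simp only [mem_Icc]
    omega
  exact (card_le_card hsub).trans (by rw [Nat.card_Icc]; omega)

variable [Fintype V] [DecidableRel G.Adj]

def degreeSum (p : G.Walk u v) : ℕ := ∑ l ∈ range p.length, G.degree (p.getVert l)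

@[simp]
theorem degreeSum_nil : (nil : G.Walk u u).degreeSum = 0 := by
  simp [degreeSum]

@[simp]
theorem degreeSum_cons {w : V} (h : G.Adj u v) (p : G.Walk v w) :
    (cons h p).degreeSum = G.degree u + p.degreeSum := by
  simp only [degreeSum, length_cons, sum_range_succ', getVert_cons_succ]
  exact Nat.add_comm _ _

theorem degreeSum_le_maxDegree_mul_length (p : G.Walk u v) :
    p.degreeSum ≤ G.maxDegree * p.length := by
  simpa [degreeSum, mul_comm] using
    sum_le_card_nsmul (range p.length) _ _ fun l _ => G.degree_le_maxDegree (p.getVert l)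

theorem degreeSum_le_three_mul_card (p : G.Walk u v) (hp : p.length = G.dist u v) :
    p.degreeSum ≤ 3 * Fintype.card V := by
  classical
  calc p.degreeSum
        = ∑ l ∈ range p.length, #(univ.bipartiteAbove (G.Adj <| p.getVert ·) l) := by
        simp only [degreeSum, degree, neighborFinset_eq_filter, bipartiteAbove]
    _ = ∑ x, #((range p.length).bipartiteBelow (G.Adj <| p.getVert ·) x) :=
        sum_card_bipartiteAbove_eq_sum_card_bipartiteBelow _
    _ ≤ ∑ _x : V, 3 := sum_le_sum fun x _ => p.card_filter_adj_getVert_le_three hp x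
    _ = 3 * Fintype.card V := by simp [mul_comm]

end SimpleGraph.Walk

namespace RoundRobin

variable {M : Type*}

def sentBefore (S : ℕ → M → Prop) (T : ℕ) : Set M := {m | ∃ s < T, S s m}

theorem monotone_sentBefore (S : ℕ → M → Prop) : Monotone (sentBefore S) :=
  fun _ _ hT _ ⟨s, hs, hS⟩ => ⟨s, by omega, hS⟩

variable [LinearOrder M]

def HasOrManyBelow (P : ℕ → Set M) (m : M) (i T : ℕ) : Prop :=
  m ∈ P T ∨ i ≤ (P T ∩ Set.Iio m).ncard

def Pipelined (P : ℕ → Set M) (Δ t : ℕ) (m : M) : Prop :=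
  ∀ i, HasOrManyBelow P m (i + 1) (t + Δ * i)

def SendsSmallestFresh (P : ℕ → Set M) (S : ℕ → M → Prop) (t : ℕ) : Prop :=
  ∀ m ∈ P t, (∀ s ≤ t, ¬ S s m) → ∃ m' ≤ m, S t m' ∧ ∀ s < t, ¬ S s m'

variable {P Q : ℕ → Set M} {S : ℕ → M → Prop} {m : M} {i j T T' Δ d t : ℕ}

theorem HasOrManyBelow.mono [Finite M] (h : HasOrManyBelow P m i T) (hPQ : P T ⊆ Q T')
    (hji : j ≤ i) : HasOrManyBelow Q m j T' :=
  h.imp (@hPQ m) fun hi => hji.trans <| hi.trans <|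
    Set.ncard_le_ncard (Set.inter_subset_inter_left _ hPQ)

theorem Pipelined.mono [Finite M] (h : Pipelined P Δ t m) (hPQ : ∀ T, P T ⊆ Q T) :
    Pipelined Q Δ t m :=
  fun i => (h i).mono (hPQ _) le_rfl

theorem SendsSmallestFresh.hasOrManyBelow_sentBefore_succ [Finite M]
    (hsend : SendsSmallestFresh P S t) (hP : HasOrManyBelow P m (i + 1) t)
    (hS : HasOrManyBelow (sentBefore S) m i t) :
    HasOrManyBelow (sentBefore S) m (i + 1) (t + 1) := by
  by_cases hunsent : ∃ m₀ ∈ P t, m₀ ≤ m ∧ ∀ s ≤ t, ¬ S s m₀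
  · obtain ⟨m₀, hm₀, hm₀m, hfresh₀⟩ := hunsent
    obtain ⟨m', hm'm₀, hsent, hfresh⟩ := hsend m₀ hm₀ hfresh₀
    rcases (hm'm₀.trans hm₀m).lt_or_eq with hm'm | rfl
    · rcases hS with hm | hcard
      · exact Or.inl (monotone_sentBefore S t.le_succ hm)
      · refine Or.inr ?_
        have hnew : m' ∉ sentBefore S t ∩ Set.Iio m :=
          fun ⟨⟨s, hs, hS⟩, _⟩ => hfresh s hs hS
        have hsub :
            insert m' (sentBefore S t ∩ Set.Iio m) ⊆ sentBefore S (t + 1) ∩ Set.Iio m := by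
          rintro x (rfl | ⟨⟨s, hs, hS⟩, hx⟩)
          · exact ⟨⟨t, t.lt_succ_self, hsent⟩, hm'm⟩
          · exact ⟨⟨s, by omega, hS⟩, hx⟩
        calc i + 1 ≤ (insert m' (sentBefore S t ∩ Set.Iio m)).ncard := by
              rw [Set.ncard_insert_of_notMem hnew]; omega
          _ ≤ _ := Set.ncard_le_ncard hsub
    · exact Or.inl ⟨t, t.lt_succ_self, hsent⟩
  · push Not at hunsent
    have hsub : ∀ x ∈ P t, x ≤ m → x ∈ sentBefore S (t + 1) := fun x hx hxm =>
      let ⟨s, hs, hS⟩ := hunsent x hx hxm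
      ⟨s, Nat.lt_succ_of_le hs, hS⟩
    rcases hP with hm | hcard
    · exact Or.inl (hsub m hm le_rfl)
    · exact Or.inr <| hcard.trans <|
        Set.ncard_le_ncard fun x ⟨hx, hxm⟩ => ⟨hsub x hx hxm.le, hxm⟩

theorem Pipelined.sent [Finite M] (hP : Monotone P) (hd : d ≤ Δ)
    (hsched : ∀ t, ∃ t', t ≤ t' ∧ t' < t + d ∧ SendsSmallestFresh P S t')
    (h : Pipelined P Δ t m) : Pipelined (sentBefore S) Δ (t + d) m := by
  have step : ∀ i, HasOrManyBelow (sentBefore S) m i (t + Δ * i) →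
      HasOrManyBelow (sentBefore S) m (i + 1) (t + d + Δ * i) := by
    intro i hi
    obtain ⟨t', ht, ht', hsend⟩ := hsched (t + Δ * i)
    have := hsend.hasOrManyBelow_sentBefore_succ ((h i).mono (hP ht) le_rfl)
      (hi.mono (monotone_sentBefore S ht) le_rfl)
    exact this.mono (monotone_sentBefore S (by omega)) le_rfl
  have reached : ∀ i, HasOrManyBelow (sentBefore S) m i (t + Δ * i) := by
    intro i
    induction i with
    | zero => exact Or.inr (Nat.zero_le _)
    | succ i ih => exact (step i ih).mono (monotone_sentBefore S
      (by rw [mul_add]; omega : t + d + Δ * i ≤ t + Δ * (i + 1))) le_rfl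
  exact fun i => step i (reached i)

theorem Pipelined.forward [Finite M] {Pu Pv : ℕ → Set M} (hPu : Monotone Pu) (hPv : Monotone Pv)
    (hrecv : ∀ s m, S s m → m ∈ Pv (s + 1)) (hd : d ≤ Δ)
    (hsched : ∀ t, ∃ t', t ≤ t' ∧ t' < t + d ∧ SendsSmallestFresh Pu S t')
    (h : Pipelined Pu Δ t m) : Pipelined Pv Δ (t + d) m :=
  (h.sent hPu hd hsched).mono fun _ _ ⟨s, hs, hS⟩ => hPv hs (hrecv s _ hS)

theorem Pipelined.mem_of_card [Fintype M] (h : Pipelined P Δ t m) :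
    m ∈ P (t + Δ * Fintype.card M) :=
  (h (Fintype.card M)).resolve_right fun hcard => by
    have := Set.ncard_le_card (P (t + Δ * Fintype.card M) ∩ Set.Iio m)
    rw [Nat.card_eq_fintype_card] at this
    omega

theorem Pipelined.along_walk {V : Type*} [Fintype V] {G : SimpleGraph V} [DecidableRel G.Adj]
    {P : V → ℕ → Set M}
    (hedge : ∀ u v, G.Adj u v → ∀ t,
      Pipelined (P u) Δ t m → Pipelined (P v) Δ (t + G.degree u) m)
    {x y : V} (p : G.Walk x y) (h : Pipelined (P x) Δ t m) :
    Pipelined (P y) Δ (t + p.degreeSum) m := by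
  induction p generalizing t with
  | nil => simpa using h
  | cons hadj q ih => simpa [add_assoc] using ih (hedge _ _ hadj t h)

end RoundRobin

theorem round_robin_dissemination_general {V M : Type*} [Fintype V] [Fintype M]
    [LinearOrder M]
    (G : SimpleGraph V) [DecidableRel G.Adj] (hconn : G.Connected)
    (K : ℕ → V → M → Prop) (S : ℕ → V → V → M → Prop) (init : M → V)
    (hinit : ∀ m, K 0 (init m) m)
    (hmono : ∀ t v m, K t v m → K (t + 1) v m)
    (hrecv : ∀ t u v m, S t u v m → K (t + 1) v m)
    (hsched : ∀ u v, G.Adj u v → ∀ t : ℕ, ∃ t', t ≤ t' ∧ t' < t + G.degree u ∧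
      ∀ m, K t' u m → (∀ s, s ≤ t' → ¬ S s u v m) →
        ∃ m', m' ≤ m ∧ S t' u v m' ∧ ∀ s, s < t' → ¬ S s u v m') :
    ∀ (v : V) (m : M),
      K (min (3 * Fintype.card V) (G.maxDegree * G.diam)
          + G.maxDegree * Fintype.card M) v m := by
  intro v m
  let knows : V → ℕ → Set M := fun u t => {m | K t u m}
  have hknows : ∀ u, Monotone (knows u) := fun u => monotone_nat_of_le_succ fun t m => hmono t u m
  have hedge : ∀ u w, G.Adj u w → ∀ t, RoundRobin.Pipelined (knows u) G.maxDegree t m →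
      RoundRobin.Pipelined (knows w) G.maxDegree (t + G.degree u) m := fun u w huw _ h =>
    h.forward (hknows u) (hknows w) (fun s m' => hrecv s u w m') (G.degree_le_maxDegree u)
      (hsched u w huw)
  have hsource : RoundRobin.Pipelined (knows (init m)) G.maxDegree 0 m :=
    fun _ => Or.inl (hknows _ (Nat.zero_le _) (hinit m))
  obtain ⟨p, hp⟩ := hconn.exists_walk_length_eq_dist (init m) v
  have hdiam : p.length ≤ G.diam := by
    have := hconn.nonempty
    exact hp ▸ G.dist_le_diam (G.connected_iff_ediam_ne_top.mp hconn)
  have htime : p.degreeSum ≤ min (3 * Fintype.card V) (G.maxDegree * G.diam) :=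
    le_min (p.degreeSum_le_three_mul_card hp)
      (p.degreeSum_le_maxDegree_mul_length.trans (Nat.mul_le_mul_left _ hdiam))
  exact hknows v (by omega) (hsource.along_walk hedge p).mem_of_card

/-- Round robin routing disseminates all `k` messages within
`min {3n, ΔD} + Δk` rounds.  `K t v m` means node `v` knows message `m` at time
`t`; `S t u v m` means `u` forwards `m` to its neighbor `v` in round `t`;
`init m` is the node initially holding `m`; there are `k` messages in total.
Each node `u` contacts each neighbor at least once in every window of `deg u`
rounds and forwards messages without repetition to the same neighbor (sending
the smallest not-yet-sent known message). -/
theorem round_robin_dissemination {V M : Type*} [Fintype V] [Fintype M]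
    [LinearOrder M]
    (G : SimpleGraph V) [DecidableRel G.Adj] (hconn : G.Connected)
    (K : ℕ → V → M → Prop) (S : ℕ → V → V → M → Prop) (init : M → V)
    (hinit : ∀ m, K 0 (init m) m)
    (hmono : ∀ t v m, K t v m → K (t + 1) v m)
    (hrecv : ∀ t u v m, S t u v m → K (t + 1) v m)
    (hsend : ∀ t u v m, S t u v m → K t u m ∧ G.Adj u v)
    (hsched : ∀ u v, G.Adj u v → ∀ t : ℕ, ∃ t', t ≤ t' ∧ t' < t + G.degree u ∧
      ∀ m, K t' u m → (∀ s, s ≤ t' → ¬ S s u v m) →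
        ∃ m', m' ≤ m ∧ S t' u v m' ∧ ∀ s, s < t' → ¬ S s u v m') :
    ∀ (v : V) (m : M),
      K (min (3 * Fintype.card V) (G.maxDegree * G.diam)
          + G.maxDegree * Fintype.card M) v m :=
  round_robin_dissemination_general G hconn K S init hinit hmono hrecv hsched
end
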